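/- Let (ρ₁,ρ₂) be density matrices on ℂ^n and (ρ₁′,ρ₂′) be density matrices on ℂ^m. The following are equivalent: (i) T(ρ₁,ρ₂) ⊇ T(ρ₁′,ρ₂′); (ii) ‖t₁ρ₁ + t₂ρ₂‖₁ ≥ ‖t₁ρ₁′ + t₂ρ₂′‖₁ for all t₁, t₂ ∈ ℝ; (iii) ‖ρ₁ − tρ₂‖₁ ≥ ‖ρ₁′ − tρ₂′‖₁ for all t ≥ 0. -/

import Mathlib

/-!
For Hermitian `A`, `max {Re Tr[EA] : 0 ≤ E ≤ 1} = Tr[A₊] = (‖A‖₁ + Tr A)/2`, attained at the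
spectral projection onto the positive eigenspaces of `A`. Applied to `A = t₁ρ₁ + t₂ρ₂`, this says
that `(‖t₁ρ₁ + t₂ρ₂‖₁ + t₁ + t₂)/2` is the support function of the compact convex set `T(ρ₁,ρ₂)` in
the direction `(t₂,t₁)`, and by Hahn–Banach a closed convex set contains another one exactly when
its support function dominates. Finally `‖t₁ρ₁ + t₂ρ₂‖₁ = |t₁ + t₂|` when `t₁, t₂` have the same
sign, and `‖t₁ρ₁ + t₂ρ₂‖₁ = |t₁| ‖ρ₁ - (-t₂/t₁)ρ₂‖₁` with `-t₂/t₁ ≥ 0` otherwise, which reduces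
(ii) to (iii).
-/

open scoped ComplexOrder

noncomputable def Matrix.PosSemidef.sqrt {n : Type*} [Fintype n] [DecidableEq n] {𝕜 : Type*}
    [RCLike 𝕜] {A : Matrix n n 𝕜} (hA : A.PosSemidef) : Matrix n n 𝕜 :=
  hA.1.eigenvectorUnitary.1 * Matrix.diagonal ((↑) ∘ (√·) ∘ hA.1.eigenvalues) *
    (star hA.1.eigenvectorUnitary : Matrix n n 𝕜)

/-- The trace norm of a matrix, `‖A‖₁ = Tr[√(AᴴA)]`. -/
noncomputable def traceNorm {n : ℕ} (A : Matrix (Fin n) (Fin n) ℂ) : ℝ :=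
  ((Matrix.posSemidef_conjTranspose_mul_self A).sqrt).trace.re

/-- The testing region `T(ρ₁,ρ₂) = { (Tr[Eρ₂], Tr[Eρ₁]) : 0 ≤ E ≤ 𝟙 }`. -/
def testRegion {n : ℕ} (ρ₁ ρ₂ : Matrix (Fin n) (Fin n) ℂ) : Set (ℝ × ℝ) :=
  { p | ∃ E : Matrix (Fin n) (Fin n) ℂ, E.PosSemidef ∧
    ((1 : Matrix (Fin n) (Fin n) ℂ) - E).PosSemidef ∧
    p = ((E * ρ₂).trace.re, (E * ρ₁).trace.re) }

open scoped MatrixOrder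

theorem subset_of_forall_exists_le_of_convex_of_isClosed {E : Type*} [TopologicalSpace E]
    [AddCommGroup E] [Module ℝ E] [IsTopologicalAddGroup E] [ContinuousSMul ℝ E]
    [LocallyConvexSpace ℝ E] {S T : Set E} (hconv : Convex ℝ S) (hclosed : IsClosed S)
    (h : ∀ f : StrongDual ℝ E, ∀ p ∈ T, ∃ q ∈ S, f p ≤ f q) : T ⊆ S := by
  intro p hp
  by_contra hpS
  obtain ⟨f, u, hfS, hfp⟩ := geometric_hahn_banach_closed_point hconv hclosed hpS
  obtain ⟨q, hq, hpq⟩ := h f p hp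
  linarith [hfS q hq]

lemma LinearMapClass.apply_prod_eq {R M F : Type*} [CommSemiring R] [AddCommMonoid M]
    [Module R M] [FunLike F (R × R) M] [LinearMapClass F R (R × R) M] (f : F) (p : R × R) :
    f p = p.1 • f (1, 0) + p.2 • f (0, 1) := by
  conv_lhs => rw [show p = p.1 • ((1 : R), (0 : R)) + p.2 • ((0 : R), (1 : R)) by ext <;> simp]
  rw [map_add, map_smul, map_smul]

namespace Matrix
variable {ι : Type*} [Fintype ι] [DecidableEq ι]

lemma re_trace_mul_nonneg {E B : Matrix ι ι ℂ} (hE : 0 ≤ E) (hB : 0 ≤ B) :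
    0 ≤ (E * B).trace.re := by
  have h : (E * B).trace = (CFC.sqrt E * B * CFC.sqrt E).trace := by
    rw [trace_mul_cycle, CFC.sqrt_mul_sqrt_self E hE]
  rw [h]
  exact (Complex.nonneg_iff.mp (nonneg_iff_posSemidef.mp
    ((CFC.sqrt_nonneg E).isSelfAdjoint.conjugate_nonneg hB)).trace_nonneg).1

lemma re_trace_mul_le_re_trace_posPart {A E : Matrix ι ι ℂ} (hA : IsSelfAdjoint A)
    (hE : E ∈ Set.Icc 0 1) : (E * A).trace.re ≤ (A⁺).trace.re := by
  have hsplit : (E * A).trace.re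
      = (A⁺).trace.re - ((1 - E) * A⁺).trace.re - (E * A⁻).trace.re := by
    conv_lhs => rw [← CFC.posPart_sub_negPart A hA]
    simp only [Matrix.mul_sub, Matrix.sub_mul, Matrix.one_mul, trace_sub, Complex.sub_re]
    ring
  have h1 := re_trace_mul_nonneg (sub_nonneg.2 hE.2) (CFC.posPart_nonneg A)
  have h2 := re_trace_mul_nonneg hE.1 (CFC.negPart_nonneg A)
  linarith

lemma exists_mem_Icc_mul_eq_posPart {A : Matrix ι ι ℂ} (hA : IsSelfAdjoint A) :
    ∃ E ∈ Set.Icc (0 : Matrix ι ι ℂ) 1, E * A = A⁺ := by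
  have hcont : ∀ f : ℝ → ℝ, ContinuousOn f (spectrum ℝ A) := fun f =>
    A.finite_real_spectrum.continuousOn f
  refine ⟨cfc (fun x : ℝ => if 0 < x then (1 : ℝ) else 0) A,
    ⟨cfc_nonneg fun x _ => by split_ifs <;> norm_num,
     cfc_le_one _ _ fun x _ => by split_ifs <;> norm_num⟩, ?_⟩
  conv_lhs => rhs; rw [← cfc_id' ℝ A]
  rw [← cfc_mul _ _ A (hcont _) (hcont _), CFC.posPart_def, cfcₙ_eq_cfc]
  refine cfc_congr fun x _ => ?_
  simp only [posPart_def]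
  split_ifs with h
  · simp [h.le]
  · simp [not_lt.1 h]

theorem isGreatest_re_trace_mul_posPart {A : Matrix ι ι ℂ} (hA : IsSelfAdjoint A) :
    IsGreatest ((fun E => (E * A).trace.re) '' Set.Icc 0 1) (A⁺).trace.re := by
  obtain ⟨P, hP, hPA⟩ := exists_mem_Icc_mul_eq_posPart hA
  exact ⟨⟨P, hP, by simp only [hPA]⟩, by
    rintro _ ⟨E, hE, rfl⟩; exact re_trace_mul_le_re_trace_posPart hA hE⟩

open scoped Matrix.Norms.L2Operator in
lemma isCompact_Icc_zero_one : IsCompact (Set.Icc (0 : Matrix ι ι ℂ) 1) :=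
  Metric.isCompact_of_isClosed_isBounded isClosed_Icc <|
    (Metric.isBounded_closedBall (x := 0) (r := ‖(1 : Matrix ι ι ℂ)‖)).subset fun _ hE =>
      mem_closedBall_zero_iff.2 (CStarAlgebra.norm_le_norm_of_nonneg_of_le hE.1 hE.2)

end Matrix

lemma Matrix.PosSemidef.sqrt_eq_cfcSqrt {ι 𝕜 : Type*} [Fintype ι] [DecidableEq ι] [RCLike 𝕜]
    {A : Matrix ι ι 𝕜} (hA : A.PosSemidef) : hA.sqrt = CFC.sqrt A := by
  rw [CFC.sqrt_eq_cfc, cfc_nnreal_eq_real _ A, hA.1.cfc_eq]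
  simp only [Matrix.IsHermitian.cfc, Unitary.conjStarAlgAut_apply, Matrix.PosSemidef.sqrt]
  congr 3
  funext i
  simp [hA.eigenvalues_nonneg i]

section
variable {n : ℕ}

lemma traceNorm_eq_re_trace_abs (A : Matrix (Fin n) (Fin n) ℂ) :
    traceNorm A = (CFC.abs A).trace.re := by
  rw [traceNorm, Matrix.PosSemidef.sqrt_eq_cfcSqrt, CFC.abs, Matrix.star_eq_conjTranspose]

lemma traceNorm_smul (c : ℂ) (A : Matrix (Fin n) (Fin n) ℂ) :
    traceNorm (c • A) = ‖c‖ * traceNorm A := by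
  simp [traceNorm_eq_re_trace_abs, CFC.abs_smul, Matrix.trace_smul]

lemma traceNorm_of_nonneg {A : Matrix (Fin n) (Fin n) ℂ} (hA : 0 ≤ A) :
    traceNorm A = A.trace.re := by
  rw [traceNorm_eq_re_trace_abs, CFC.abs_of_nonneg A hA]

lemma traceNorm_add_re_trace {A : Matrix (Fin n) (Fin n) ℂ} (hA : IsSelfAdjoint A) :
    traceNorm A + A.trace.re = 2 * (A⁺).trace.re := by
  rw [traceNorm_eq_re_trace_abs, ← Complex.add_re, ← Matrix.trace_add, CFC.abs_add_self A hA,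
    two_nsmul, Matrix.trace_add, Complex.add_re, two_mul]

lemma testRegion_eq_image (ρ₁ ρ₂ : Matrix (Fin n) (Fin n) ℂ) :
    testRegion ρ₁ ρ₂ = (fun E => ((E * ρ₂).trace.re, (E * ρ₁).trace.re)) '' Set.Icc 0 1 := by
  ext p
  constructor
  · rintro ⟨E, hE, hE', rfl⟩
    exact ⟨E, ⟨Matrix.nonneg_iff_posSemidef.2 hE, hE'⟩, rfl⟩
  · rintro ⟨E, ⟨hE, hE'⟩, rfl⟩
    exact ⟨E, Matrix.nonneg_iff_posSemidef.1 hE, hE', rfl⟩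

lemma convex_testRegion (ρ₁ ρ₂ : Matrix (Fin n) (Fin n) ℂ) : Convex ℝ (testRegion ρ₁ ρ₂) := by
  rw [testRegion_eq_image]
  exact (convex_Icc 0 1).is_linear_image
    ⟨fun E F => by simp [Matrix.add_mul], fun c E => by simp [Matrix.trace_smul]⟩

lemma isCompact_testRegion (ρ₁ ρ₂ : Matrix (Fin n) (Fin n) ℂ) :
    IsCompact (testRegion ρ₁ ρ₂) := by
  rw [testRegion_eq_image]
  exact Matrix.isCompact_Icc_zero_one.image (by fun_prop)

theorem isGreatest_testRegion {ρ₁ ρ₂ : Matrix (Fin n) (Fin n) ℂ} (hρ₁ : IsSelfAdjoint ρ₁)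
    (hρ₂ : IsSelfAdjoint ρ₂) (t₁ t₂ : ℝ) :
    IsGreatest ((fun p : ℝ × ℝ => t₂ * p.1 + t₁ * p.2) '' testRegion ρ₁ ρ₂)
      ((traceNorm ((t₁ : ℂ) • ρ₁ + (t₂ : ℂ) • ρ₂) +
        ((t₁ : ℂ) • ρ₁ + (t₂ : ℂ) • ρ₂).trace.re) / 2) := by
  set A := (t₁ : ℂ) • ρ₁ + (t₂ : ℂ) • ρ₂
  have hA : IsSelfAdjoint A := (IsSelfAdjoint.smul (Complex.conj_ofReal t₁) hρ₁).add
    (IsSelfAdjoint.smul (Complex.conj_ofReal t₂) hρ₂)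
  rw [testRegion_eq_image, Set.image_image, traceNorm_add_re_trace hA,
    mul_div_cancel_left₀ _ two_ne_zero]
  convert Matrix.isGreatest_re_trace_mul_posPart hA using 3 with E
  simp only [A, Matrix.mul_add, Matrix.mul_smul, Matrix.trace_add, Matrix.trace_smul,
    Complex.add_re, smul_eq_mul, Complex.re_ofReal_mul]
  ring

lemma traceNorm_smul_add_smul_eq_abs_mul (ρ₁ ρ₂ : Matrix (Fin n) (Fin n) ℂ) {t₁ : ℝ}
    (ht₁ : t₁ ≠ 0) (t₂ : ℝ) : traceNorm ((t₁ : ℂ) • ρ₁ + (t₂ : ℂ) • ρ₂) =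
      |t₁| * traceNorm (ρ₁ - ((-t₂ / t₁ : ℝ) : ℂ) • ρ₂) := by
  rw [← Real.norm_eq_abs, ← Complex.norm_real, ← traceNorm_smul, smul_sub, smul_smul,
    ← Complex.ofReal_mul, mul_div_cancel₀ _ ht₁, Complex.ofReal_neg, neg_smul, sub_neg_eq_add]

end

section
variable {n m : ℕ} {ρ₁ ρ₂ : Matrix (Fin n) (Fin n) ℂ} {ρ₁' ρ₂' : Matrix (Fin m) (Fin m) ℂ}

lemma re_trace_smul_add_smul (hρ₁ : ρ₁.trace = 1) (hρ₂ : ρ₂.trace = 1) (t₁ t₂ : ℝ) :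
    ((t₁ : ℂ) • ρ₁ + (t₂ : ℂ) • ρ₂).trace.re = t₁ + t₂ := by
  simp [Matrix.trace_smul, hρ₁, hρ₂]

theorem testRegion_subset_iff_forall_traceNorm_le (hρ₁ : IsSelfAdjoint ρ₁)
    (hρ₁tr : ρ₁.trace = 1) (hρ₂ : IsSelfAdjoint ρ₂) (hρ₂tr : ρ₂.trace = 1)
    (hρ₁' : IsSelfAdjoint ρ₁') (hρ₁'tr : ρ₁'.trace = 1) (hρ₂' : IsSelfAdjoint ρ₂')
    (hρ₂'tr : ρ₂'.trace = 1) :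
    testRegion ρ₁' ρ₂' ⊆ testRegion ρ₁ ρ₂ ↔ ∀ t₁ t₂ : ℝ,
      traceNorm ((t₁ : ℂ) • ρ₁' + (t₂ : ℂ) • ρ₂') ≤ traceNorm ((t₁ : ℂ) • ρ₁ + (t₂ : ℂ) • ρ₂) := by
  have hT t₁ t₂ := isGreatest_testRegion hρ₁ hρ₂ t₁ t₂
  have hT' t₁ t₂ := isGreatest_testRegion hρ₁' hρ₂' t₁ t₂
  simp only [re_trace_smul_add_smul hρ₁tr hρ₂tr, re_trace_smul_add_smul hρ₁'tr hρ₂'tr] at hT hT'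
  refine ⟨fun h t₁ t₂ => ?_, fun h => ?_⟩
  · linarith [(hT' t₁ t₂).mono (hT t₁ t₂) (Set.image_mono h)]
  · refine subset_of_forall_exists_le_of_convex_of_isClosed (convex_testRegion ρ₁ ρ₂)
      (isCompact_testRegion ρ₁ ρ₂).isClosed fun f p hp => ?_
    obtain ⟨q, hq, hfq⟩ := (hT (f (0, 1)) (f (1, 0))).1
    have hfp := (hT' (f (0, 1)) (f (1, 0))).2 ⟨p, hp, rfl⟩
    refine ⟨q, hq, ?_⟩
    rw [LinearMapClass.apply_prod_eq f p, LinearMapClass.apply_prod_eq f q]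
    simp only [smul_eq_mul] at hfq hfp ⊢
    linarith [h (f (0, 1)) (f (1, 0))]

lemma traceNorm_smul_add_smul_of_nonneg (hρ₁ : ρ₁.PosSemidef) (hρ₁tr : ρ₁.trace = 1)
    (hρ₂ : ρ₂.PosSemidef) (hρ₂tr : ρ₂.trace = 1) {t₁ t₂ : ℝ} (h₁ : 0 ≤ t₁) (h₂ : 0 ≤ t₂) :
    traceNorm ((t₁ : ℂ) • ρ₁ + (t₂ : ℂ) • ρ₂) = t₁ + t₂ := by
  have hA : 0 ≤ (t₁ : ℂ) • ρ₁ + (t₂ : ℂ) • ρ₂ := by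
    rw [Complex.coe_smul, Complex.coe_smul]
    exact add_nonneg (smul_nonneg h₁ hρ₁.nonneg) (smul_nonneg h₂ hρ₂.nonneg)
  rw [traceNorm_of_nonneg hA, re_trace_smul_add_smul hρ₁tr hρ₂tr]

lemma traceNorm_smul_add_smul_of_mul_nonneg (hρ₁ : ρ₁.PosSemidef) (hρ₁tr : ρ₁.trace = 1)
    (hρ₂ : ρ₂.PosSemidef) (hρ₂tr : ρ₂.trace = 1) {t₁ t₂ : ℝ} (ht : 0 ≤ t₁ * t₂) :
    traceNorm ((t₁ : ℂ) • ρ₁ + (t₂ : ℂ) • ρ₂) = |t₁ + t₂| := by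
  rcases mul_nonneg_iff.1 ht with ⟨h₁, h₂⟩ | ⟨h₁, h₂⟩
  · rw [traceNorm_smul_add_smul_of_nonneg hρ₁ hρ₁tr hρ₂ hρ₂tr h₁ h₂,
      abs_of_nonneg (add_nonneg h₁ h₂)]
  · have hneg : (t₁ : ℂ) • ρ₁ + (t₂ : ℂ) • ρ₂ =
        (-1 : ℂ) • (((-t₁ : ℝ) : ℂ) • ρ₁ + ((-t₂ : ℝ) : ℂ) • ρ₂) := by
      push_cast
      module
    rw [hneg, traceNorm_smul, traceNorm_smul_add_smul_of_nonneg hρ₁ hρ₁tr hρ₂ hρ₂tr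
      (neg_nonneg.2 h₁) (neg_nonneg.2 h₂), abs_of_nonpos (add_nonpos h₁ h₂)]
    simp only [norm_neg, norm_one, one_mul, neg_add]

theorem forall_traceNorm_le_iff_forall_traceNorm_sub_smul_le (hρ₁ : ρ₁.PosSemidef)
    (hρ₁tr : ρ₁.trace = 1) (hρ₂ : ρ₂.PosSemidef) (hρ₂tr : ρ₂.trace = 1)
    (hρ₁' : ρ₁'.PosSemidef) (hρ₁'tr : ρ₁'.trace = 1) (hρ₂' : ρ₂'.PosSemidef)
    (hρ₂'tr : ρ₂'.trace = 1) :
    (∀ t₁ t₂ : ℝ,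
      traceNorm ((t₁ : ℂ) • ρ₁' + (t₂ : ℂ) • ρ₂') ≤ traceNorm ((t₁ : ℂ) • ρ₁ + (t₂ : ℂ) • ρ₂)) ↔
    ∀ t : ℝ, 0 ≤ t → traceNorm (ρ₁' - (t : ℂ) • ρ₂') ≤ traceNorm (ρ₁ - (t : ℂ) • ρ₂) := by
  refine ⟨fun h t _ => by simpa [sub_eq_add_neg] using h 1 (-t), fun h t₁ t₂ => ?_⟩
  rcases le_or_gt 0 (t₁ * t₂) with ht | ht
  · rw [traceNorm_smul_add_smul_of_mul_nonneg hρ₁' hρ₁'tr hρ₂' hρ₂'tr ht,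
      traceNorm_smul_add_smul_of_mul_nonneg hρ₁ hρ₁tr hρ₂ hρ₂tr ht]
  · have ht₁ : t₁ ≠ 0 := left_ne_zero_of_mul ht.ne
    have hratio : 0 ≤ -t₂ / t₁ := by
      have h := div_nonneg (neg_nonneg.2 ht.le) (mul_self_nonneg t₁)
      rwa [neg_mul_eq_mul_neg, mul_div_mul_left _ _ ht₁] at h
    rw [traceNorm_smul_add_smul_eq_abs_mul _ _ ht₁, traceNorm_smul_add_smul_eq_abs_mul _ _ ht₁]
    exact mul_le_mul_of_nonneg_left (h _ hratio) (abs_nonneg t₁)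

end

/-- Lemma 1 of the paper: for density matrices `(ρ₁,ρ₂)` on `ℂ^n` and `(ρ₁',ρ₂')` on
`ℂ^m`, the following are equivalent:
(i) `T(ρ₁,ρ₂) ⊇ T(ρ₁',ρ₂')`;
(ii) `‖t₁ρ₁ + t₂ρ₂‖₁ ≥ ‖t₁ρ₁' + t₂ρ₂'‖₁` for all `t₁, t₂ ∈ ℝ`;
(iii) `‖ρ₁ - tρ₂‖₁ ≥ ‖ρ₁' - tρ₂'‖₁` for all `t ≥ 0`. -/
theorem testing_region_inclusion_tfae
    {n m : ℕ} (ρ₁ ρ₂ : Matrix (Fin n) (Fin n) ℂ) (ρ₁' ρ₂' : Matrix (Fin m) (Fin m) ℂ)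
    (hρ₁ : ρ₁.PosSemidef) (hρ₁tr : ρ₁.trace = 1)
    (hρ₂ : ρ₂.PosSemidef) (hρ₂tr : ρ₂.trace = 1)
    (hρ₁' : ρ₁'.PosSemidef) (hρ₁'tr : ρ₁'.trace = 1)
    (hρ₂' : ρ₂'.PosSemidef) (hρ₂'tr : ρ₂'.trace = 1) :
    List.TFAE
      [ testRegion ρ₁' ρ₂' ⊆ testRegion ρ₁ ρ₂,
        ∀ t₁ t₂ : ℝ,
          traceNorm ((t₁ : ℂ) • ρ₁' + (t₂ : ℂ) • ρ₂') ≤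
            traceNorm ((t₁ : ℂ) • ρ₁ + (t₂ : ℂ) • ρ₂),
        ∀ t : ℝ, 0 ≤ t →
          traceNorm (ρ₁' - (t : ℂ) • ρ₂') ≤ traceNorm (ρ₁ - (t : ℂ) • ρ₂) ] := by
  tfae_have 1 ↔ 2 := testRegion_subset_iff_forall_traceNorm_le hρ₁.1 hρ₁tr hρ₂.1 hρ₂tr
    hρ₁'.1 hρ₁'tr hρ₂'.1 hρ₂'tr
  tfae_have 2 ↔ 3 := forall_traceNorm_le_iff_forall_traceNorm_sub_smul_le hρ₁ hρ₁tr hρ₂ hρ₂tr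
    hρ₁' hρ₁'tr hρ₂' hρ₂'tr
  tfae_finish
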